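/- Let b > 0 and let u ≥ v be positive functions on (0,b), with u ∈ C³((0,b)) ∩ C¹([0,b]), v ∈ C²((0,b)) ∩ C¹([0,b]), u(0) = u'(0) = 0, u' > 0 on (0,b), and the main condition: whenever u(t) = v(s) with 0 < t ≤ s < b, then u''(t) ≤ v''(s). If v(s₀) = u(s₀) for some s₀ ∈ (0,b), then v ≡ u on [0,b]. -/

import Mathlib

/-!
The difference `w = u - v` is nonnegative and vanishes to first order at `s₀`. On a compact
interval `[p, q] ⊂ (0, b)` through `s₀`, every value `v s` is taken by `u` at some `t ≤ s`
(since `u 0 = 0` while `v` is bounded away from `0` there), so the main condition and the mean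
value theorem give `w'' ≤ C w`, with `C` a Lipschitz constant of `u''` divided by a lower bound
of `u'`. Factoring `d²/ds² - C = (d/ds + √C) (d/ds - √C)` and applying Grönwall's inequality
twice forces `w ≤ 0` on `[p, q]`; continuity extends `w = 0` to `[0, b]`.
-/

open Set Filter Topology NNReal

theorem nonpos_of_hasDerivWithinAt_le_mul_self {f f' : ℝ → ℝ} {k a b : ℝ}
    (hf : ContinuousOn f (Icc a b)) (hf' : ∀ x ∈ Ico a b, HasDerivWithinAt f (f' x) (Ici x) x)
    (ha : f a ≤ 0) (bound : ∀ x ∈ Ico a b, f' x ≤ k * f x) :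
    ∀ x ∈ Icc a b, f x ≤ 0 := by
  intro x hx
  simpa only [gronwallBound_ε0_δ0] using
    le_gronwallBound_of_liminf_deriv_right_le hf
      (fun x hx _r hr => (hf' x hx).liminf_right_slope_le hr) ha
      (fun x hx => (bound x hx).trans_eq (add_zero _).symm) x hx

theorem nonpos_of_deriv2_le_mul_self_of_eq_zero_left {w w' w'' : ℝ → ℝ} {C a b : ℝ} (hC : 0 ≤ C)
    (hw : ∀ x ∈ Icc a b, HasDerivAt w (w' x) x) (hw' : ∀ x ∈ Icc a b, HasDerivAt w' (w'' x) x)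
    (bound : ∀ x ∈ Icc a b, w'' x ≤ C * w x) (hwa : w a = 0) (hw'a : w' a = 0) :
    ∀ x ∈ Icc a b, w x ≤ 0 := by
  have hl : √C * √C = C := Real.mul_self_sqrt hC
  have hφ : ∀ x ∈ Icc a b,
      HasDerivAt (fun y => w' y - √C * w y) (w'' x - √C * w' x) x := fun x hx =>
    (hw' x hx).sub ((hw x hx).const_mul _)
  have hw'_le : ∀ x ∈ Icc a b, w' x - √C * w x ≤ 0 :=
    nonpos_of_hasDerivWithinAt_le_mul_self (k := -√C)
      (fun x hx => (hφ x hx).continuousAt.continuousWithinAt)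
      (fun x hx => (hφ x (Ico_subset_Icc_self hx)).hasDerivWithinAt)
      (by simp [hwa, hw'a])
      (fun x hx => by linear_combination bound x (Ico_subset_Icc_self hx) - w x * hl)
  exact nonpos_of_hasDerivWithinAt_le_mul_self (k := √C)
    (fun x hx => (hw x hx).continuousAt.continuousWithinAt)
    (fun x hx => (hw x (Ico_subset_Icc_self hx)).hasDerivWithinAt) hwa.le
    (fun x hx => by linarith [hw'_le x (Ico_subset_Icc_self hx)])

theorem nonpos_of_deriv2_le_mul_self_of_eq_zero {w w' w'' : ℝ → ℝ} {C a p q : ℝ} (hC : 0 ≤ C)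
    (hw : ∀ x ∈ Icc p q, HasDerivAt w (w' x) x) (hw' : ∀ x ∈ Icc p q, HasDerivAt w' (w'' x) x)
    (bound : ∀ x ∈ Icc p q, w'' x ≤ C * w x) (ha : a ∈ Icc p q) (hwa : w a = 0)
    (hw'a : w' a = 0) :
    ∀ x ∈ Icc p q, w x ≤ 0 := by
  intro x hx
  rcases le_total a x with hax | hxa
  · have hsub : Icc a q ⊆ Icc p q := Icc_subset_Icc_left ha.1
    exact nonpos_of_deriv2_le_mul_self_of_eq_zero_left hC (fun y hy => hw y (hsub hy))
      (fun y hy => hw' y (hsub hy)) (fun y hy => bound y (hsub hy)) hwa hw'a x ⟨hax, hx.2⟩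
  · have hneg : ∀ y ∈ Icc (-a) (-p), -y ∈ Icc p q := fun y hy =>
      ⟨le_neg_of_le_neg hy.2, (neg_le.1 hy.1).trans ha.2⟩
    simpa using nonpos_of_deriv2_le_mul_self_of_eq_zero_left (w := fun y => w (-y))
      (w' := fun y => -w' (-y)) (w'' := fun y => w'' (-y)) hC
      (fun y hy => by
        simpa [Function.comp_def] using (hw (-y) (hneg y hy)).scomp y (hasDerivAt_neg y))
      (fun y hy => by
        simpa [Function.comp_def] using
          ((hw' (-y) (hneg y hy)).scomp y (hasDerivAt_neg y)).fun_neg)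
      (fun y hy => bound (-y) (hneg y hy)) (by simpa using hwa) (by simpa using hw'a)
      (-x) ⟨neg_le_neg hxa, neg_le_neg hx.1⟩

theorem LipschitzOnWith.sub_le_div_mul_sub_of_le_deriv {f g : ℝ → ℝ} {K : ℝ≥0} {m : ℝ}
    {D : Set ℝ} (hg : LipschitzOnWith K g D) (hD : Convex ℝ D) (hf : ContinuousOn f D)
    (hf' : DifferentiableOn ℝ f (interior D)) (hm : 0 < m)
    (hfm : ∀ x ∈ interior D, m ≤ deriv f x) {t s : ℝ} (ht : t ∈ D) (hs : s ∈ D) (hts : t ≤ s) :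
    g s - g t ≤ K / m * (f s - f t) := by
  have hincr : m * (s - t) ≤ f s - f t :=
    hD.mul_sub_le_image_sub_of_le_deriv hf hf' hfm t ht s hs hts
  have hlip : g s - g t ≤ K * (s - t) := by
    have := hg.dist_le_mul s hs t ht
    rw [Real.dist_eq, Real.dist_eq, abs_of_nonneg (sub_nonneg.2 hts)] at this
    exact (le_abs_self _).trans this
  rw [div_mul_eq_mul_div, le_div_iff₀ hm]
  nlinarith [K.2]

theorem ContDiffOn.hasDerivAt_deriv {f : ℝ → ℝ} {s : Set ℝ} {n : WithTop ℕ∞}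
    (hf : ContDiffOn ℝ n f s) (hn : n ≠ 0) (hs : IsOpen s) {x : ℝ} (hx : x ∈ s) :
    HasDerivAt f (deriv f x) x :=
  ((hf.differentiableOn hn).differentiableAt (hs.mem_nhds hx)).hasDerivAt

theorem exists_forall_mem_image_Icc {u v : ℝ → ℝ} {p q : ℝ} (hp : 0 < p) (hpq : p ≤ q)
    (hu : ContinuousOn u (Icc 0 q)) (hu0 : u 0 = 0) (hv : ContinuousOn v (Icc p q))
    (hvpos : ∀ x ∈ Icc p q, 0 < v x) (hvu : ∀ x ∈ Icc p q, v x ≤ u x) :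
    ∃ c ∈ Ioo 0 p, ∀ s ∈ Icc p q, v s ∈ u '' Icc c s := by
  obtain ⟨ε, hε, hεv⟩ := isCompact_Icc.exists_forall_le' hv hvpos
  have hu_right : Tendsto u (𝓝[>] 0) (𝓝 0) := by
    have := (hu 0 ⟨le_rfl, hp.le.trans hpq⟩).mono_of_mem_nhdsWithin
      (Icc_mem_nhdsGT (hp.trans_le hpq))
    rwa [ContinuousWithinAt, hu0] at this
  obtain ⟨c, hcu, hc⟩ := ((hu_right.eventually (gt_mem_nhds hε)).and (Ioo_mem_nhdsGT hp)).exists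
  exact ⟨c, hc, fun s hs => intermediate_value_Icc (hc.2.le.trans hs.1)
    (hu.mono (Icc_subset_Icc hc.1.le hs.2)) ⟨(hcu.trans_le (hεv s hs)).le, hvu s hs⟩⟩

theorem exists_deriv2_sub_le_mul_sub {b p q : ℝ} {u v : ℝ → ℝ} (hp : 0 < p) (hpq : p ≤ q)
    (hqb : q < b) (huv : ∀ x ∈ Icc 0 b, v x ≤ u x) (hvpos : ∀ x ∈ Ioo 0 b, 0 < v x)
    (hu3 : ContDiffOn ℝ 3 u (Ioo 0 b)) (hu : ContinuousOn u (Icc 0 b))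
    (hv : ContinuousOn v (Ioo 0 b)) (hu0 : u 0 = 0)
    (hmain : ∀ t s : ℝ, 0 < t → t ≤ s → s < b → u t = v s →
      deriv (deriv u) t ≤ deriv (deriv v) s)
    (hu' : ∀ x ∈ Ioo 0 b, 0 < deriv u x) :
    ∃ C, 0 ≤ C ∧ ∀ s ∈ Icc p q, deriv (deriv u) s - deriv (deriv v) s ≤ C * (u s - v s) := by
  have hsub : ∀ {c}, 0 < c → Icc c q ⊆ Ioo 0 b := fun hc _ hx =>
    ⟨hc.trans_le hx.1, hx.2.trans_lt hqb⟩
  obtain ⟨c, hc, htouch⟩ := exists_forall_mem_image_Icc hp hpq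
    (hu.mono (Icc_subset_Icc_right hqb.le)) hu0 (hv.mono (hsub hp))
    (fun x hx => hvpos x (hsub hp hx)) (fun x hx => huv x (Ioo_subset_Icc_self (hsub hp hx)))
  have hcq := hsub hc.1
  have hu2 : ContDiffOn ℝ 2 (deriv u) (Ioo 0 b) := hu3.deriv_of_isOpen isOpen_Ioo (by norm_num)
  obtain ⟨K, hK⟩ := ((hu2.deriv_of_isOpen (m := 1) isOpen_Ioo (by norm_num)).mono hcq
    ).exists_lipschitzOnWith one_ne_zero (convex_Icc c q) isCompact_Icc
  obtain ⟨m, hm, hm_le⟩ := isCompact_Icc.exists_forall_le' (hu2.continuousOn.mono hcq)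
    fun x hx => hu' x (hcq hx)
  refine ⟨K / m, by positivity, fun s hs => ?_⟩
  obtain ⟨t, ht, hts⟩ := htouch s hs
  have hlip := hK.sub_le_div_mul_sub_of_le_deriv (convex_Icc c q)
    (hu.mono (hcq.trans Ioo_subset_Icc_self))
    ((hu3.differentiableOn (by norm_num)).mono (interior_subset.trans hcq)) hm
    (fun x hx => hm_le x (interior_subset hx)) ⟨ht.1, ht.2.trans hs.2⟩ ⟨ht.1.trans ht.2, hs.2⟩ ht.2
  have hu''_le := hmain t s (hc.1.trans_le ht.1) ht.2 (hs.2.trans_lt hqb) hts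
  rw [hts] at hlip
  linarith

theorem hopf_lemmaA1_one_dimensional_general
(b : ℝ) (u v : ℝ → ℝ)
    (huv : ∀ x ∈ Icc (0:ℝ) b, v x ≤ u x)
    (hvpos : ∀ x ∈ Ioo (0:ℝ) b, 0 < v x)
    (hu3 : ContDiffOn ℝ 3 u (Ioo 0 b))
    (hu1 : ContDiffOn ℝ 1 u (Icc 0 b))
    (hv2 : ContDiffOn ℝ 2 v (Ioo 0 b))
    (hv1 : ContDiffOn ℝ 1 v (Icc 0 b))
    (hu0 : u 0 = 0)
    (hmain : ∀ t s : ℝ, 0 < t → t ≤ s → s < b → u t = v s →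
      deriv (deriv u) t ≤ deriv (deriv v) s)
    (hu' : ∀ x ∈ Ioo (0:ℝ) b, 0 < deriv u x)
    (s₀ : ℝ) (hs₀ : s₀ ∈ Ioo (0:ℝ) b) (hvu : v s₀ = u s₀) :
    ∀ x ∈ Icc (0:ℝ) b, v x = u x := by
  have hw : ∀ x ∈ Ioo 0 b, HasDerivAt (fun y => u y - v y) (deriv u x - deriv v x) x :=
    fun x hx => (hu3.hasDerivAt_deriv (by norm_num) isOpen_Ioo hx).sub
      (hv2.hasDerivAt_deriv (by norm_num) isOpen_Ioo hx)
  have hw' : ∀ x ∈ Ioo 0 b, HasDerivAt (fun y => deriv u y - deriv v y)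
      (deriv (deriv u) x - deriv (deriv v) x) x := fun x hx =>
    ((hu3.deriv_of_isOpen (m := 2) isOpen_Ioo (by norm_num)).hasDerivAt_deriv (by norm_num)
      isOpen_Ioo hx).sub
    ((hv2.deriv_of_isOpen (m := 1) isOpen_Ioo (by norm_num)).hasDerivAt_deriv (by norm_num)
      isOpen_Ioo hx)
  have hw's₀ : deriv u s₀ - deriv v s₀ = 0 := by
    refine IsLocalMin.hasDerivAt_eq_zero ?_ (hw s₀ hs₀)
    filter_upwards [isOpen_Ioo.mem_nhds hs₀] with y hy
    simpa [hvu] using huv y (Ioo_subset_Icc_self hy)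
  have hEq : EqOn v u (Ioo 0 b) := by
    intro x hx
    have hsub : Icc (min x s₀) (max x s₀) ⊆ Ioo 0 b := fun y hy =>
      ⟨(lt_min hx.1 hs₀.1).trans_le hy.1, hy.2.trans_lt (max_lt hx.2 hs₀.2)⟩
    obtain ⟨C, hC, bound⟩ := exists_deriv2_sub_le_mul_sub (lt_min hx.1 hs₀.1) min_le_max
      (max_lt hx.2 hs₀.2) huv hvpos hu3 hu1.continuousOn hv2.continuousOn hu0 hmain hu'
    have hwx := nonpos_of_deriv2_le_mul_self_of_eq_zero hC (fun y hy => hw y (hsub hy))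
      (fun y hy => hw' y (hsub hy)) bound ⟨min_le_right _ _, le_max_right _ _⟩
      (by simp [hvu]) hw's₀ x ⟨min_le_left _ _, le_max_left _ _⟩
    linarith [huv x (Ioo_subset_Icc_self hx)]
  exact hEq.of_subset_closure hv1.continuousOn hu1.continuousOn Ioo_subset_Icc_self
    (by rw [closure_Ioo (hs₀.1.trans hs₀.2).ne])

/-- Lemma A.1 of the Appendix: if v touches u at an interior point then v ≡ u. -/
theorem hopf_lemmaA1_one_dimensional
(b : ℝ) (hb : 0 < b) (u v : ℝ → ℝ)
    (huv : ∀ x ∈ Icc (0:ℝ) b, v x ≤ u x)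
    (hupos : ∀ x ∈ Ioo (0:ℝ) b, 0 < u x)
    (hvpos : ∀ x ∈ Ioo (0:ℝ) b, 0 < v x)
    (hu3 : ContDiffOn ℝ 3 u (Ioo 0 b))
    (hu1 : ContDiffOn ℝ 1 u (Icc 0 b))
    (hv2 : ContDiffOn ℝ 2 v (Ioo 0 b))
    (hv1 : ContDiffOn ℝ 1 v (Icc 0 b))
    (hu0 : u 0 = 0)
    (hu'0 : derivWithin u (Icc 0 b) 0 = 0)
    (hmain : ∀ t s : ℝ, 0 < t → t ≤ s → s < b → u t = v s →
      deriv (deriv u) t ≤ deriv (deriv v) s)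
    (hu' : ∀ x ∈ Ioo (0:ℝ) b, 0 < deriv u x)
    (s₀ : ℝ) (hs₀ : s₀ ∈ Ioo (0:ℝ) b) (hvu : v s₀ = u s₀) :
    ∀ x ∈ Icc (0:ℝ) b, v x = u x :=
  hopf_lemmaA1_one_dimensional_general b u v huv hvpos hu3 hu1 hv2 hv1 hu0 hmain hu' s₀ hs₀ hvu
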